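/- There exists a constant C > 0 such that the following holds: for every N ≥ 2, every pair of unit vectors σ, w in ℂ^N with ⟨w,σ⟩ = ⟨σ,w⟩ = N^{−1/2}, letting G = −(I − 2|σ⟩⟨σ|)·(I − 2|w⟩⟨w|) and H = 2i·N^{−1/2}·(|w⟩⟨σ| − |σ⟩⟨w|), one has ‖exp(−2iH) − G²‖ ≤ C·N^{−3/2} in operator norm. -/

import Mathlib

open scoped InnerProductSpace

/-- The outer product |u⟩⟨v| : the rank-one operator sending φ to ⟨v,φ⟩·u
(inner product conjugate-linear in the first argument). -/
noncomputable def outer {N : ℕ} (u v : EuclideanSpace ℂ (Fin N)) :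
    EuclideanSpace ℂ (Fin N) →L[ℂ] EuclideanSpace ℂ (Fin N) :=
  ContinuousLinearMap.toSpanSingleton ℂ u ∘L (innerSL ℂ v)

/-! With `s = N^(-1/2)` and `A = |w⟩⟨σ| - |σ⟩⟨w|` one has `-2iH = 4sA`. Multiplying out the
rank-one operators with `⟨σ,σ⟩ = ⟨w,w⟩ = 1` and `⟨σ,w⟩ = ⟨w,σ⟩ = s` gives
`G² = 1 + 4sA + (4sA)²/2 - 8s³A`: the square of the product of the two reflections is the
second-order Taylor polynomial of `exp (4sA)` up to `8s³A`. Since `‖A‖ ≤ 2`, the Taylor remainder is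
at most `‖4sA‖³ e^‖4sA‖ ≤ 512 e⁸ s³`, and `s³ = N^(-3/2)`. -/

open scoped Nat
open Finset

lemma outer_apply {N : ℕ} (u v y : EuclideanSpace ℂ (Fin N)) : outer u v y = ⟪v, y⟫_ℂ • u := rfl

lemma outer_mul_outer {N : ℕ} (u v x y : EuclideanSpace ℂ (Fin N)) :
    outer u v * outer x y = ⟪v, x⟫_ℂ • outer u y := by
  ext1 z
  simp [outer_apply, smul_smul, mul_comm]

lemma norm_outer_le {N : ℕ} (u v : EuclideanSpace ℂ (Fin N)) : ‖outer u v‖ ≤ ‖u‖ * ‖v‖ :=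
  ContinuousLinearMap.opNorm_le_bound _ (by positivity) fun y => by
    rw [outer_apply, norm_smul, mul_comm ‖u‖, mul_right_comm]
    gcongr
    exact norm_inner_le_norm v y

lemma norm_outer_sub_outer_le {N : ℕ} (u v : EuclideanSpace ℂ (Fin N)) :
    ‖outer u v - outer v u‖ ≤ 2 * (‖u‖ * ‖v‖) :=
  calc ‖outer u v - outer v u‖ ≤ ‖u‖ * ‖v‖ + ‖v‖ * ‖u‖ :=
        norm_sub_le_of_le (norm_outer_le u v) (norm_outer_le v u)
    _ = 2 * (‖u‖ * ‖v‖) := by ring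

lemma norm_exp_sub_sum_range_le {𝕂 𝔸 : Type*} [RCLike 𝕂] [NormedRing 𝔸] [NormedAlgebra 𝕂 𝔸]
    [CompleteSpace 𝔸] (x : 𝔸) {n : ℕ} (hn : 0 < n) :
    ‖NormedSpace.exp x - ∑ m ∈ range n, (m !⁻¹ : 𝕂) • x ^ m‖ ≤ ‖x‖ ^ n * Real.exp ‖x‖ := by
  have htail : NormedSpace.exp x - ∑ m ∈ range n, (m !⁻¹ : 𝕂) • x ^ m
      = ∑' k, ((k + n)!⁻¹ : 𝕂) • x ^ (k + n) := by
    simp only [NormedSpace.exp_eq_tsum (𝕂 := 𝕂)]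
    rw [← (NormedSpace.expSeries_summable' (𝕂 := 𝕂) x).sum_add_tsum_nat_add n,
      add_sub_cancel_left]
  have hterm (k : ℕ) : ‖((k + n)!⁻¹ : 𝕂) • x ^ (k + n)‖ ≤ ‖x‖ ^ n * (‖x‖ ^ k / k !) := by
    rw [norm_smul, norm_inv, RCLike.norm_natCast, div_eq_inv_mul, mul_left_comm, ← pow_add, add_comm n]
    gcongr
    · exact Nat.le_add_right k n
    · exact norm_pow_le' x (by omega)
  have hdom : Summable fun k : ℕ => ‖x‖ ^ n * (‖x‖ ^ k / k !) :=
    (Real.summable_pow_div_factorial ‖x‖).mul_left _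
  have hnorm : Summable fun k : ℕ => ‖((k + n)!⁻¹ : 𝕂) • x ^ (k + n)‖ :=
    .of_nonneg_of_le (fun _ => norm_nonneg _) hterm hdom
  calc ‖NormedSpace.exp x - ∑ m ∈ range n, (m !⁻¹ : 𝕂) • x ^ m‖
      ≤ ∑' k, ‖((k + n)!⁻¹ : 𝕂) • x ^ (k + n)‖ := htail ▸ norm_tsum_le_tsum_norm hnorm
    _ ≤ ∑' k : ℕ, ‖x‖ ^ n * (‖x‖ ^ k / k !) := hnorm.tsum_le_tsum hterm hdom
    _ = ‖x‖ ^ n * Real.exp ‖x‖ := by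
      rw [tsum_mul_left, Real.exp_eq_exp_ℝ, NormedSpace.exp_eq_tsum_div]

lemma reflection_mul_reflection_sq {N : ℕ} {σ w : EuclideanSpace ℂ (Fin N)} {s : ℂ}
    (hσ : ‖σ‖ = 1) (hw : ‖w‖ = 1) (hwσ : ⟪w, σ⟫_ℂ = s) (hσw : ⟪σ, w⟫_ℂ = s) :
    ((1 - (2 : ℂ) • outer σ σ) * (1 - (2 : ℂ) • outer w w)) ^ 2
      = 1 + (4 * s) • (outer w σ - outer σ w) + (8 * s ^ 2) • (outer w σ - outer σ w) ^ 2
        - (8 * s ^ 3) • (outer w σ - outer σ w) := by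
  have hσσ : ⟪σ, σ⟫_ℂ = 1 := by simp [inner_self_eq_norm_sq_to_K, hσ]
  have hww : ⟪w, w⟫_ℂ = 1 := by simp [inner_self_eq_norm_sq_to_K, hw]
  simp only [sq, mul_sub, sub_mul, one_mul, mul_one, smul_mul_assoc,
    mul_smul_comm, outer_mul_outer, hσσ, hww, hwσ, hσw, smul_smul, one_smul]
  module

lemma norm_exp_sub_reflection_mul_reflection_sq_le {N : ℕ} {σ w : EuclideanSpace ℂ (Fin N)}
    {s : ℝ} (hs₀ : 0 ≤ s) (hs₁ : s ≤ 1) (hσ : ‖σ‖ = 1) (hw : ‖w‖ = 1)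
    (hwσ : ⟪w, σ⟫_ℂ = s) (hσw : ⟪σ, w⟫_ℂ = s) :
    ‖NormedSpace.exp ((4 * (s : ℂ)) • (outer w σ - outer σ w))
        - ((1 - (2 : ℂ) • outer σ σ) * (1 - (2 : ℂ) • outer w w)) ^ 2‖
      ≤ (512 * Real.exp 8 + 16) * s ^ 3 := by
  set A := outer w σ - outer σ w
  have hA : ‖A‖ ≤ 2 := by simpa [hσ, hw] using norm_outer_sub_outer_le w σ
  have hX_norm : ‖(4 * (s : ℂ)) • A‖ ≤ 8 * s := by
    grw [norm_smul, hA]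
    simp only [Complex.norm_mul, Complex.norm_ofNat, Complex.norm_real, Real.norm_eq_abs,
      abs_of_nonneg hs₀]
    linarith
  have hcube_norm : ‖(8 * (s : ℂ) ^ 3) • A‖ ≤ 16 * s ^ 3 := by
    grw [norm_smul, hA]
    simp only [Complex.norm_mul, Complex.norm_ofNat, norm_pow, Complex.norm_real, Real.norm_eq_abs,
      abs_of_nonneg hs₀]
    linarith
  have htaylor : ((1 - (2 : ℂ) • outer σ σ) * (1 - (2 : ℂ) • outer w w)) ^ 2
      = ∑ m ∈ range 3, (m !⁻¹ : ℂ) • ((4 * (s : ℂ)) • A) ^ m - (8 * (s : ℂ) ^ 3) • A := by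
    rw [reflection_mul_reflection_sq hσ hw hwσ hσw]
    simp only [sum_range_succ, range_one, sum_singleton, Nat.factorial, Nat.cast_one, inv_one,
      pow_zero, pow_one, one_smul, smul_pow]
    module
  rw [htaylor, sub_sub_eq_add_sub, add_sub_right_comm]
  calc _ ≤ ‖(4 * (s : ℂ)) • A‖ ^ 3 * Real.exp ‖(4 * (s : ℂ)) • A‖ + ‖(8 * (s : ℂ) ^ 3) • A‖ :=
        norm_add_le_of_le (norm_exp_sub_sum_range_le _ (by norm_num)) le_rfl
    _ ≤ (8 * s) ^ 3 * Real.exp 8 + 16 * s ^ 3 := by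
        gcongr
        linarith
    _ = (512 * Real.exp 8 + 16) * s ^ 3 := by ring

theorem stmt_18 :
    ∃ C > (0 : ℝ), ∀ (N : ℕ), 2 ≤ N → ∀ σ w : EuclideanSpace ℂ (Fin N),
      ‖σ‖ = 1 → ‖w‖ = 1 →
      ⟪w, σ⟫_ℂ = (((N : ℝ) ^ (-(1 : ℝ) / 2) : ℝ) : ℂ) →
      ⟪σ, w⟫_ℂ = (((N : ℝ) ^ (-(1 : ℝ) / 2) : ℝ) : ℂ) →
      ∀ G H : EuclideanSpace ℂ (Fin N) →L[ℂ] EuclideanSpace ℂ (Fin N),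
        G = -((1 - (2 : ℂ) • outer σ σ) * (1 - (2 : ℂ) • outer w w)) →
        H = (2 * Complex.I * (((N : ℝ) ^ (-(1 : ℝ) / 2) : ℝ) : ℂ)) •
              (outer w σ - outer σ w) →
      ‖NormedSpace.exp ((-(2 * Complex.I)) • H) - G ^ 2‖ ≤ C * (N : ℝ) ^ (-(3 : ℝ) / 2) := by
  refine ⟨512 * Real.exp 8 + 16, by positivity, ?_⟩
  intro N hN σ w hσ hw hwσ hσw G H hG hH
  set s : ℝ := (N : ℝ) ^ (-(1 : ℝ) / 2)
  have hs_le_one : s ≤ 1 :=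
    Real.rpow_le_one_of_one_le_of_nonpos (by norm_cast; omega) (by norm_num)
  have hs_cube : s ^ 3 = (N : ℝ) ^ (-(3 : ℝ) / 2) := by
    rw [← Real.rpow_natCast, ← Real.rpow_mul (by positivity)]
    norm_num
  have hX : (-(2 * Complex.I)) • H = (4 * (s : ℂ)) • (outer w σ - outer σ w) := by
    rw [hH, smul_smul]
    congr 1
    linear_combination (-4 * (s : ℂ)) * Complex.I_sq
  rw [hX, ← neg_sq G, hG, neg_neg, ← hs_cube]
  exact norm_exp_sub_reflection_mul_reflection_sq_le (by positivity) hs_le_one hσ hw hwσ hσw
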